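/- arXiv:1606.06777 — 5 statements merged into one kernel-verified Lean document; each statement's English description precedes it below -/
import Mathlib

section
/- In an idempotent inverse category, there is at most one monomorphism between any two objects: if f, g : X → Y are both monic, then f = g. -/
open CategoryTheory

universe v u

/-- In an idempotent inverse category, there is at most one monomorphism
between any two objects. -/
theorem stmt_3 {C : Type u} [Category.{v} C]
    (pinv : ∀ {X Y : C}, (X ⟶ Y) → (Y ⟶ X))
    (h1 : ∀ {X Y : C} (f : X ⟶ Y), f ≫ pinv f ≫ f = f)
    (h2 : ∀ {X Y : C} (f : X ⟶ Y), pinv f ≫ f ≫ pinv f = pinv f)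
    (huniq : ∀ {X Y : C} (f : X ⟶ Y) (g : Y ⟶ X),
      f ≫ g ≫ f = f → g ≫ f ≫ g = g → g = pinv f)
    (hidem : ∀ {X : C} (e : X ⟶ X), e ≫ e = e) :
    ∀ {X Y : C} (f g : X ⟶ Y), Mono f → Mono g → f = g := by
  intro X Y f g hf hg
  -- split: f ≫ pinv f = 𝟙 X, g ≫ pinv g = 𝟙 X
  have hsf : f ≫ pinv f = 𝟙 X := by
    apply hf.right_cancellation
    simpa using h1 f
  have hsg : g ≫ pinv g = 𝟙 X := by
    apply hg.right_cancellation
    simpa using h1 g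
  -- idempotency of pinv g ≫ f
  have hi : (pinv g ≫ f) ≫ (pinv g ≫ f) = pinv g ≫ f := hidem _
  have key1 : f ≫ pinv g ≫ f = f := by
    have := congrArg (fun h => g ≫ h) hi
    simp only [Category.assoc] at this
    rw [reassoc_of% hsg] at this
    simpa [reassoc_of% hsg] using this
  have key2 : pinv g ≫ f ≫ pinv g = pinv g := by
    apply hf.right_cancellation
    simpa [Category.assoc] using hi
  have e1 : pinv g = pinv f := huniq f (pinv g) key1 key2
  have e2 : f = pinv (pinv f) := huniq (pinv f) f (h2 f) (h1 f)
  have e3 : g = pinv (pinv g) := huniq (pinv g) g (h2 g) (h1 g)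
  rw [e2, e3, e1]
end

section
/- A diagram F : I → Inj (from a small category I to the category of sets and injections) has a cocone if and only if for the colimit of F computed in Set, all the canonical maps F(I) → colim F are injective. -/
/-!
Every cocone leg factors as `colimit.desc ∘ colimit.ι`, so a cocone with injective legs forces the
colimit legs to be injective; conversely, the colimit cocone is itself such a cocone.
-/

open CategoryTheory

universe u

namespace CategoryTheory.Limits

theorem colimit.injective_ι_of_injective_cocone {J C : Type*} [Category J] [Category C]
    {FC : C → C → Type*} {CC : C → Type*} [∀ X Y, FunLike (FC X Y) (CC X) (CC Y)]
    [ConcreteCategory C FC] {F : J ⥤ C} [HasColimit F] (c : Cocone F) {i : J}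
    (hc : Function.Injective (c.ι.app i)) : Function.Injective (colimit.ι F i) :=
  Function.Injective.of_comp (f := colimit.desc F c) fun x y h => hc <| by
    simpa only [Function.comp_apply, colimit.ι_desc_apply] using h

end CategoryTheory.Limits

theorem stmt_11_general {I : Type u} [SmallCategory I] (F : I ⥤ Type u) :
    (∃ (X : Type u) (c : ∀ i : I, F.obj i → X),
        (∀ i : I, Function.Injective (c i)) ∧
        ∀ {i j : I} (f : i ⟶ j) (x : F.obj i), c j (F.map f x) = c i x) ↔
    ∀ i : I, Function.Injective (Limits.colimit.ι F i) := by
  constructor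
  · rintro ⟨X, c, hc, hcompat⟩ i
    exact Limits.colimit.injective_ι_of_injective_cocone
      (F.coconeTypesEquiv ⟨X, c, fun f => funext (hcompat f)⟩) (hc i)
  · intro h
    exact ⟨Limits.colimit F, fun i => Limits.colimit.ι F i, h,
      fun f x => Limits.colimit.w_apply F f x⟩

/-- A diagram of sets and injections has a cocone in the category of sets and
injections iff all the canonical maps into its colimit computed in `Set` are
injective. -/
theorem stmt_11 {I : Type u} [SmallCategory I] (F : I ⥤ Type u)
    (hinj : ∀ {i j : I} (f : i ⟶ j), Function.Injective (F.map f)) :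
    (∃ (X : Type u) (c : ∀ i : I, F.obj i → X),
        (∀ i : I, Function.Injective (c i)) ∧
        ∀ {i j : I} (f : i ⟶ j) (x : F.obj i), c j (F.map f x) = c i x) ↔
    ∀ i : I, Function.Injective (Limits.colimit.ι F i) :=
  stmt_11_general F
end

section
/- Let I be a finite category and F : I → Inj a diagram with no cocone in Inj. Then there is a diagram F' : I → Inj with each F'(J) a finite subset of F(J) and each F'(i) a restriction of F(i), which also has no cocone in Inj. -/
open CategoryTheory

/-- If a diagram of sets and injections over a finite category has no cocone in
the category of sets and injections, then some pointwise restriction of it to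
finite subsets (closed under the diagram maps) also has no cocone. -/
theorem stmt_12 {I : Type} [SmallCategory I] [FinCategory I] (F : I ⥤ Type)
    (hinj : ∀ {i j : I} (f : i ⟶ j), Function.Injective (F.map f))
    (hno : ¬ ∃ (X : Type) (c : ∀ i : I, F.obj i → X),
        (∀ i : I, Function.Injective (c i)) ∧
        ∀ {i j : I} (f : i ⟶ j) (x : F.obj i), c j (F.map f x) = c i x) :
    ∃ S : ∀ i : I, Set (F.obj i),
      (∀ i : I, (S i).Finite) ∧
      (∀ {i j : I} (f : i ⟶ j), F.map f '' S i ⊆ S j) ∧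
      ¬ ∃ (X : Type) (c : ∀ i : I, F.obj i → X),
          (∀ i : I, Set.InjOn (c i) (S i)) ∧
          ∀ {i j : I} (f : i ⟶ j), ∀ x ∈ S i, c j (F.map f x) = c i x := by
  -- the relation generating the colimit quotient
  set r : (Σ i : I, F.obj i) → (Σ i : I, F.obj i) → Prop :=
    fun p q => ∃ f : p.1 ⟶ q.1, F.map f p.2 = q.2 with hr
  -- the candidate cocone into the quotient
  set c0 : ∀ i : I, F.obj i → Quot r := fun i x => Quot.mk r ⟨i, x⟩ with hc0
  have hcomm : ∀ {i j : I} (f : i ⟶ j) (x : F.obj i),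
      c0 j (F.map f x) = c0 i x := by
    intro i j f x
    exact (Quot.sound ⟨f, rfl⟩).symm
  -- it must fail injectivity somewhere
  have : ∃ (i : I) (x y : F.obj i), x ≠ y ∧ c0 i x = c0 i y := by
    by_contra h
    push_neg at h
    exact hno ⟨Quot r, c0, fun i x y hxy => by
      by_contra hne; exact (h i x y hne) hxy, hcomm⟩
  obtain ⟨i, x, y, hxy, heq⟩ := this
  have hgen : Relation.EqvGen r ⟨i, x⟩ ⟨i, y⟩ := Quot.eqvGen_exact heq
  -- key lemma: a finite support for the chain
  have key : ∀ a b : (Σ i : I, F.obj i), Relation.EqvGen r a b →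
      ∃ T : Set (Σ i : I, F.obj i), T.Finite ∧ a ∈ T ∧ b ∈ T ∧
        ∀ (X : Type) (c : ∀ i : I, F.obj i → X),
          (∀ {k l : I} (f : k ⟶ l) (z : F.obj k), (⟨k, z⟩ : Σ i : I, F.obj i) ∈ T →
            c l (F.map f z) = c k z) →
          c a.1 a.2 = c b.1 b.2 := by
    intro a b h
    induction h with
    | rel p q hpq =>
      refine ⟨{p, q}, (Set.finite_singleton q).insert p, Or.inl rfl, Or.inr rfl, ?_⟩
      intro X c hc
      obtain ⟨f, hf⟩ := hpq
      rw [← hf]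
      exact (hc f p.2 (Or.inl (Sigma.eta p))).symm
    | refl p =>
      exact ⟨{p}, Set.finite_singleton p, rfl, rfl, fun _ _ _ => rfl⟩
    | symm p q _ ih =>
      obtain ⟨T, hT, hp, hq, hcT⟩ := ih
      exact ⟨T, hT, hq, hp, fun X c hc => (hcT X c hc).symm⟩
    | trans p q s _ _ ih1 ih2 =>
      obtain ⟨T1, hT1, hp1, hq1, hc1⟩ := ih1
      obtain ⟨T2, hT2, hq2, hs2, hc2⟩ := ih2
      refine ⟨T1 ∪ T2, hT1.union hT2, Or.inl hp1, Or.inr hs2, ?_⟩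
      intro X c hc
      exact (hc1 X c fun f z hz => hc f z (Or.inl hz)).trans
        (hc2 X c fun f z hz => hc f z (Or.inr hz))
  obtain ⟨T, hTfin, hxT, hyT, hcT⟩ := key ⟨i, x⟩ ⟨i, y⟩ hgen
  -- close T under the diagram maps
  refine ⟨fun j => ⋃ (k : I) (f : k ⟶ j), F.map f '' {z : F.obj k | (⟨k, z⟩ : Σ i : I, F.obj i) ∈ T},
    ?_, ?_, ?_⟩
  · intro j
    apply Set.finite_iUnion
    intro k
    apply Set.finite_iUnion
    intro f
    exact (hTfin.preimage (f := fun z : F.obj k => (⟨k, z⟩ : Σ i : I, F.obj i))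
      (fun z _ z' _ h => by injection h)).image _
  · intro j l g w hw
    obtain ⟨v, hv, rfl⟩ := hw
    simp only [Set.mem_iUnion] at hv ⊢
    obtain ⟨k, f, z, hz, rfl⟩ := hv
    exact ⟨k, f ≫ g, z, hz, by simp⟩
  · rintro ⟨X, c, hcinj, hccomm⟩
    have hmem : ∀ p : Σ i : I, F.obj i, p ∈ T →
        p.2 ∈ ⋃ (k : I) (f : k ⟶ p.1), F.map f '' {z : F.obj k | (⟨k, z⟩ : Σ i : I, F.obj i) ∈ T} := by
      intro p hp
      simp only [Set.mem_iUnion]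
      exact ⟨p.1, 𝟙 p.1, p.2, by simpa [Sigma.eta] using hp, by simp⟩
    have := hcT X c (fun {k l} f z hz => hccomm f z (hmem ⟨k, z⟩ hz))
    exact hxy (hcinj i (hmem ⟨i, x⟩ hxT) (hmem ⟨i, y⟩ hyT) this)
end

section
/- In a category C with the amalgamation property, the relation f ~ g (for parallel morphisms f, g : X → Y) defined by 'there exists h with h ∘ f = h ∘ g' is a congruence on C: it is an equivalence relation on each hom-set and is compatible with composition on both sides. -/
open CategoryTheory

universe v u

/-- The relation on parallel morphisms: `f ~ g` iff some morphism coequalizes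
them. -/
def coeqRel {C : Type u} [Category.{v} C] {X Y : C} (f g : X ⟶ Y) : Prop :=
  ∃ (Z : C) (h : Y ⟶ Z), f ≫ h = g ≫ h

/-- In a category with the amalgamation property, the relation `f ~ g ⟺ ∃ h,
h ∘ f = h ∘ g` is a congruence: an equivalence relation on each hom-set which
is compatible with composition on both sides. -/
theorem stmt_13 {C : Type u} [Category.{v} C]
    (AP : ∀ {A B D : C} (f : A ⟶ B) (g : A ⟶ D),
      ∃ (X : C) (h : B ⟶ X) (k : D ⟶ X), f ≫ h = g ≫ k) :
    (∀ {X Y : C} (f : X ⟶ Y), coeqRel f f) ∧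
    (∀ {X Y : C} (f g : X ⟶ Y), coeqRel f g → coeqRel g f) ∧
    (∀ {X Y : C} (f g h : X ⟶ Y), coeqRel f g → coeqRel g h → coeqRel f h) ∧
    (∀ {W X Y : C} (e : W ⟶ X) (f g : X ⟶ Y), coeqRel f g → coeqRel (e ≫ f) (e ≫ g)) ∧
    (∀ {X Y Z : C} (f g : X ⟶ Y) (e : Y ⟶ Z), coeqRel f g → coeqRel (f ≫ e) (g ≫ e)) := by
  refine ⟨?_, ?_, ?_, ?_, ?_⟩
  · intro X Y f; exact ⟨Y, 𝟙 Y, rfl⟩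
  · rintro X Y f g ⟨Z, h, e⟩; exact ⟨Z, h, e.symm⟩
  · rintro X Y f g h ⟨Z1, p, e1⟩ ⟨Z2, q, e2⟩
    obtain ⟨W, u, v, huv⟩ := AP p q
    exact ⟨W, p ≫ u, by
      calc f ≫ p ≫ u = (f ≫ p) ≫ u := by rw [Category.assoc]
        _ = (g ≫ p) ≫ u := by rw [e1]
        _ = g ≫ q ≫ v := by rw [Category.assoc, huv]
        _ = (g ≫ q) ≫ v := by rw [Category.assoc]
        _ = (h ≫ q) ≫ v := by rw [e2]
        _ = h ≫ p ≫ u := by rw [Category.assoc, huv]⟩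
  · rintro W X Y e f g ⟨Z, h, eq⟩
    exact ⟨Z, h, by rw [Category.assoc, Category.assoc, eq]⟩
  · rintro X Y Z f g e ⟨Z1, h, eq⟩
    obtain ⟨W, u, v, huv⟩ := AP e h
    exact ⟨W, u, by
      rw [Category.assoc, Category.assoc, huv, ← Category.assoc, eq, Category.assoc]⟩
end

section
/- Let I be a finite poset that is tree-like. Then for every category C with the amalgamation property, every diagram F : I → C has a cocone. -/
open CategoryTheory

universe v u

/-- A subset of a poset is connected: nonempty, and any two of its elements are
joined by a zigzag of comparabilities within the subset. -/
def ConnIn {α : Type*} [PartialOrder α] (s : Set α) : Prop :=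
  s.Nonempty ∧ ∀ x ∈ s, ∀ y ∈ s,
    Relation.ReflTransGen (fun a b => a ∈ s ∧ b ∈ s ∧ (a ≤ b ∨ b ≤ a)) x y

/-- `K` is a connected component of the subset `s` of a poset: the set of
elements of `s` joined within `s` to some fixed element of `s`. -/
def IsComp {α : Type*} [PartialOrder α] (s K : Set α) : Prop :=
  ∃ x ∈ s, K = {y | y ∈ s ∧
    Relation.ReflTransGen (fun a b => a ∈ s ∧ b ∈ s ∧ (a ≤ b ∨ b ≤ a)) x y}

/-- The inductive class of tree-like subsets of a poset: `s` is tree-like iff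
it has a minimal element `b` such that every connected component `K` of
`s \ {b}` is tree-like and the part of `K` lying above `b` is connected (and
nonempty).  This is exactly the inductive rule: a tree-like poset is a disjoint
union of tree-like posets `K₁, …, Kₙ` with connected upward-closed subsets
`Uₖ ⊆ Kₖ`, together with a new bottom point lying below exactly the `Uₖ`. -/
inductive TreeLike {α : Type*} [PartialOrder α] : Set α → Prop
  | mk (s : Set α) (b : α) (hb : b ∈ s)
      (hmin : ∀ x ∈ s, ¬ x < b)
      (hconn : ∀ K : Set α, IsComp (s \ {b}) K → ConnIn {x | x ∈ K ∧ b < x})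
      (hcomp : ∀ K : Set α, IsComp (s \ {b}) K → TreeLike K) : TreeLike s

/-! Induct along the tree-like structure.  For a bottom point `b`, each component `K`
of the rest has a cocone by induction; all arrows from `F b` into `K` that factor through the
part of `K` above `b` agree there, because that part is connected, so the cocone on `K` extends
to `K ∪ {b}`.  The legs at `b` of these finitely many cocones form a finite family of arrows out
of `F b`, which the amalgamation property closes off to a single cocone on the whole poset. -/

open Relation

def AmalgamationProperty (C : Type u) [Category.{v} C] : Prop :=
  ∀ {A B D : C} (f : A ⟶ B) (g : A ⟶ D), ∃ (X : C) (h : B ⟶ X) (k : D ⟶ X), f ≫ h = g ≫ k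

section Amalgamation

variable {C : Type u} [Category.{v} C]

theorem AmalgamationProperty.exists_forall_comp_eq (hC : AmalgamationProperty C)
    {ι : Type*} [Finite ι] {A : C} {X : ι → C} (f : ∀ i, A ⟶ X i) :
    ∃ (Y : C) (h : A ⟶ Y), ∀ i, ∃ g : X i ⟶ Y, f i ≫ g = h := by
  classical
  cases nonempty_fintype ι
  suffices ∀ S : Finset ι, ∃ (Y : C) (h : A ⟶ Y), ∀ i ∈ S, ∃ g : X i ⟶ Y, f i ≫ g = h by
    simpa using this Finset.univ
  intro S
  induction S using Finset.induction_on with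
  | empty => exact ⟨A, 𝟙 A, by simp⟩
  | insert a S _ ih =>
    obtain ⟨Y, h, hS⟩ := ih
    obtain ⟨Z, p, q, hpq⟩ := hC (f a) h
    refine ⟨Z, h ≫ q, fun i hi => ?_⟩
    rcases Finset.mem_insert.mp hi with rfl | hi
    · exact ⟨p, hpq⟩
    · obtain ⟨g, hg⟩ := hS i hi
      exact ⟨g ≫ q, by rw [← Category.assoc, hg]⟩

end Amalgamation

section Components

variable {α : Type*} [PartialOrder α]

def ComparableIn (t : Set α) (a b : α) : Prop :=
  a ∈ t ∧ b ∈ t ∧ (a ≤ b ∨ b ≤ a)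

instance (t : Set α) : Std.Symm (ComparableIn t) :=
  ⟨fun _ _ ⟨ha, hb, hab⟩ => ⟨hb, ha, hab.symm⟩⟩

def componentIn (t : Set α) (x : α) : Set α :=
  {y | y ∈ t ∧ ReflTransGen (ComparableIn t) x y}

theorem isComp_componentIn {t : Set α} {x : α} (hx : x ∈ t) : IsComp t (componentIn t x) :=
  ⟨x, hx, rfl⟩

theorem mem_componentIn_self {t : Set α} {x : α} (hx : x ∈ t) : x ∈ componentIn t x :=
  ⟨hx, .refl⟩

theorem mem_componentIn_of_le {t : Set α} {x y : α} (hx : x ∈ t) (hy : y ∈ t) (hxy : x ≤ y) :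
    y ∈ componentIn t x :=
  ⟨hy, .single ⟨hx, hy, .inl hxy⟩⟩

theorem IsComp.subset {t K : Set α} (hK : IsComp t K) : K ⊆ t := by
  obtain ⟨w, -, rfl⟩ := hK
  exact fun _ hy => hy.1

theorem IsComp.eq_componentIn {t K : Set α} (hK : IsComp t K) {x : α} (hx : x ∈ K) :
    K = componentIn t x := by
  obtain ⟨w, -, rfl⟩ := hK
  have hwx : ReflTransGen (ComparableIn t) w x := hx.2
  ext z
  exact and_congr_right fun _ => ⟨(symm hwx).trans, hwx.trans⟩

theorem ConnIn.forall_of_iff {s : Set α} (hs : ConnIn s) {P : α → Prop} {x : α} (hx : x ∈ s)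
    (hPx : P x) (hP : ∀ a ∈ s, ∀ b ∈ s, a ≤ b → (P a ↔ P b)) : ∀ y ∈ s, P y := by
  intro y hy
  induction hs.2 x hx y hy with
  | refl => exact hPx
  | tail _ hab ih =>
    obtain ⟨ha, hb, hab | hba⟩ := hab
    · exact (hP _ ha _ hb hab).mp (ih ha)
    · exact (hP _ hb _ ha hba).mpr (ih ha)

end Components

section Cocones

variable {α : Type*} [PartialOrder α] {C : Type u} [Category.{v} C]

structure CoconeOn (F : α ⥤ C) (s : Set α) where
  pt : C
  ι : ∀ i ∈ s, F.obj i ⟶ pt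
  w : ∀ ⦃i j : α⦄ (hi : i ∈ s) (hj : j ∈ s) (hij : i ≤ j), F.map (homOfLE hij) ≫ ι j hj = ι i hi

variable {F : α ⥤ C}

open Classical in
noncomputable def CoconeOn.insertBottom {K : Set α} (c : CoconeOn F K) (b : α)
    (hb : ∀ x ∈ K, ¬x ≤ b) (φ : F.obj b ⟶ c.pt)
    (hφ : ∀ x (hx : x ∈ K) (hbx : b < x), F.map (homOfLE hbx.le) ≫ c.ι x hx = φ) :
    CoconeOn F (insert b K) where
  pt := c.pt
  ι x hx := if h : x = b then eqToHom (congrArg F.obj h) ≫ φ else c.ι x (hx.resolve_left h)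
  w i j hi hj hij := by
    by_cases hjb : j = b
    · subst hjb
      have hib : i = j := hi.elim id fun hi => absurd hij (hb i hi)
      subst hib
      simp
    · have hj' : j ∈ K := hj.resolve_left hjb
      by_cases hib : i = b
      · subst hib
        simp [hjb, ← hφ j hj' (lt_of_le_of_ne hij fun h => hb j hj' h.ge)]
      · simp [hib, hjb, c.w (hi.resolve_left hib) hj' hij]

theorem CoconeOn.exists_bottom_leg {K : Set α} (c : CoconeOn F K) {b : α}
    (hK : ConnIn {x | x ∈ K ∧ b < x}) :
    ∃ φ : F.obj b ⟶ c.pt,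
      ∀ x (hx : x ∈ K) (hbx : b < x), F.map (homOfLE hbx.le) ≫ c.ι x hx = φ := by
  obtain ⟨u, huK, hbu⟩ := hK.1
  refine ⟨F.map (homOfLE hbu.le) ≫ c.ι u huK, fun x hx hbx => ?_⟩
  refine hK.forall_of_iff (P := fun x => ∀ (hx : x ∈ K) (hbx : b < x),
    F.map (homOfLE hbx.le) ≫ c.ι x hx = F.map (homOfLE hbu.le) ≫ c.ι u huK)
    ⟨huK, hbu⟩ (fun _ _ => rfl) ?_ x ⟨hx, hbx⟩ hx hbx
  rintro y ⟨hy, hby⟩ z ⟨hz, hbz⟩ hyz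
  have : F.map (homOfLE hby.le) ≫ c.ι y hy = F.map (homOfLE hbz.le) ≫ c.ι z hz := by
    rw [← c.w hy hz hyz, ← Category.assoc, ← F.map_comp, homOfLE_comp]
  exact ⟨fun h _ _ => by rw [← this]; exact h hy hby, fun h _ _ => by rw [this]; exact h hz hbz⟩

theorem nonempty_coconeOn_of_components [Finite α] (hC : AmalgamationProperty C) {s : Set α}
    {b : α} (hmin : ∀ x ∈ s, ¬x < b)
    (hcocone : ∀ K, IsComp (s \ {b}) K → Nonempty (CoconeOn F (insert b K))) :
    Nonempty (CoconeOn F s) := by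
  classical
  let κ := {K : Set α // IsComp (s \ {b}) K}
  let c (k : κ) : CoconeOn F (insert b k.1) := (hcocone k.1 k.2).some
  obtain ⟨Y, h, hg⟩ := hC.exists_forall_comp_eq fun k : κ => (c k).ι b (Set.mem_insert b k.1)
  choose g hg using hg
  let comp (x : α) (hx : x ∈ s \ {b}) : κ := ⟨componentIn (s \ {b}) x, isComp_componentIn hx⟩
  let leg (x : α) (hx : x ∈ s \ {b}) : F.obj x ⟶ Y :=
    (c (comp x hx)).ι x (Set.mem_insert_of_mem b (mem_componentIn_self hx)) ≫ g (comp x hx)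
  have leg_eq (k : κ) (x : α) (hx : x ∈ s \ {b}) (hk : x ∈ k.1) :
      leg x hx = (c k).ι x (Set.mem_insert_of_mem b hk) ≫ g k := by
    obtain rfl : comp x hx = k := Subtype.ext (k.2.eq_componentIn hk).symm
    rfl
  refine ⟨{ pt := Y
            ι := fun x hx => if hxb : x = b then eqToHom (congrArg F.obj hxb) ≫ h
              else leg x ⟨hx, hxb⟩
            w := fun i j hi hj hij => ?_ }⟩
  by_cases hib : i = b
  · subst hib
    by_cases hji : j = i
    · subst hji
      simp
    · have hj' : j ∈ s \ {i} := ⟨hj, hji⟩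
      rw [dif_neg hji, dif_pos rfl, eqToHom_refl, Category.id_comp,
        leg_eq (comp j hj') j hj' (mem_componentIn_self hj'), ← Category.assoc,
        (c _).w (Set.mem_insert i _), hg]
  · have hjb : j ≠ b := fun h => hmin i hi (lt_of_le_of_ne (h ▸ hij) hib)
    have hi' : i ∈ s \ {b} := ⟨hi, hib⟩
    have hj' : j ∈ s \ {b} := ⟨hj, hjb⟩
    rw [dif_neg hib, dif_neg hjb, leg_eq (comp i hi') j hj' (mem_componentIn_of_le hi' hj' hij),
      leg_eq (comp i hi') i hi' (mem_componentIn_self hi'),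
      ← Category.assoc, (c _).w]

end Cocones

theorem TreeLike.nonempty_coconeOn {α : Type*} [PartialOrder α] [Finite α]
    {C : Type u} [Category.{v} C] (hC : AmalgamationProperty C) (F : α ⥤ C) {s : Set α}
    (hs : TreeLike s) : Nonempty (CoconeOn F s) := by
  induction hs with
  | mk s b _ hmin hconn _ ih =>
    refine nonempty_coconeOn_of_components hC hmin fun K hK => ?_
    obtain ⟨c⟩ := ih K hK
    have hbK : ∀ x ∈ K, ¬x ≤ b := fun x hx hxb =>
      have ⟨hxs, hxb'⟩ := hK.subset hx
      hmin x hxs (lt_of_le_of_ne hxb hxb')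
    obtain ⟨φ, hφ⟩ := c.exists_bottom_leg (hconn K hK)
    exact ⟨c.insertBottom b hbK φ hφ⟩

/-- Every diagram over a finite tree-like poset in a category with the
amalgamation property has a cocone. -/
theorem stmt_15 {α : Type} [Fintype α] [PartialOrder α]
    (htree : TreeLike (Set.univ : Set α))
    {C : Type u} [Category.{v} C]
    (AP : ∀ {A B D : C} (f : A ⟶ B) (g : A ⟶ D),
      ∃ (X : C) (h : B ⟶ X) (k : D ⟶ X), f ≫ h = g ≫ k)
    (F : α ⥤ C) :
    ∃ (X : C) (c : ∀ i : α, F.obj i ⟶ X),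
      ∀ {i j : α} (f : i ⟶ j), F.map f ≫ c j = c i := by
  obtain ⟨c⟩ := htree.nonempty_coconeOn (fun f g => AP f g) F
  exact ⟨c.pt, fun i => c.ι i trivial, fun f => c.w trivial trivial (leOfHom f)⟩
end
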